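/- Let m be a positive integer and d = 2^m. Let RM(1,m) ⊆ 𝔽₂^d be the first-order Reed–Muller code of length d, i.e., indexing coordinates by the points of 𝔽₂^m, the set of all functions x ↦ b + ⟨c, x⟩ with c ∈ 𝔽₂^m and b ∈ 𝔽₂. Let a be a positive integer and let C ⊆ 𝔽₂^d be a binary linear code containing RM(1,m) such that the set of Hamming weights of codewords of C is {0, d/2 − a, d/2, d/2 + a, d}. Let u₁, …, u_f be a complete set of coset representatives of C modulo RM(1,m), and let ψ : 𝔽₂^d → {±1}^d ⊆ ℝ^d send (x_i) to ((−1)^{x_i}). Then the sets ψ(u₁ + RM(1,m)), …, ψ(u_f + RM(1,m)) form a partition of ψ(C) in which each part is a cross polytope of norm √d (a set {v₁,…,v_d, −v₁,…,−v_d} with ⟨v_i,v_j⟩ = d·δ_{ij}), and the inner product of any two vectors lying in distinct parts belongs to {2a, −2a, 0}. -/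

import Mathlib

/-!
Since `ψ` turns addition into pointwise multiplication, `⟨ψ x, ψ y⟩ = d - 2 wt(x + y)`.
A coset `u + RM(1, m)` consists of the words `u + ⟨s, ·⟩` and their complements, whose images
are `v_s` and `-v_s`; the `v_s` are orthogonal because `∑_r (-1)^⟨s + t, r⟩ = d [s = t]`.
For words `x`, `y` in distinct cosets, `x + y ∈ C \ RM(1, m)`, so its weight is neither `0`
nor `d` (as `0, 1 ∈ RM(1, m)`), hence one of `d/2 - a`, `d/2`, `d/2 + a`.
-/

/-- The first-order Reed–Muller code `RM(1, m)` of length `2^m`, with coordinates indexed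
by the points of `𝔽₂^m`: all functions `x ↦ b + ⟨c, x⟩` with `c ∈ 𝔽₂^m`, `b ∈ 𝔽₂`. -/
def RM1 (m : ℕ) : Set ((Fin m → ZMod 2) → ZMod 2) :=
  {g | ∃ c : Fin m → ZMod 2, ∃ b : ZMod 2, g = fun x => b + ∑ i, c i * x i}

/-- The map `ψ : 𝔽₂^d → {±1}^d ⊆ ℝ^d` sending `(x_t)` to `((-1)^(x_t))`. -/
def psi {m : ℕ} (x : (Fin m → ZMod 2) → ZMod 2) : (Fin m → ZMod 2) → ℝ :=
  fun t => (-1 : ℝ) ^ (x t).val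

open Finset Matrix

theorem ZMod.eq_zero_or_eq_one_two (x : ZMod 2) : x = 0 ∨ x = 1 := by
  revert x; decide

theorem ZMod.eq_one_of_ne_zero_two {x : ZMod 2} (hx : x ≠ 0) : x = 1 :=
  (ZMod.eq_zero_or_eq_one_two x).resolve_left hx

section Sign

variable {R : Type*} [Ring R]

theorem neg_one_pow_val_add (x y : ZMod 2) :
    (-1 : R) ^ (x + y).val = (-1) ^ x.val * (-1) ^ y.val := by
  rw [ZMod.val_add, ← neg_one_pow_eq_pow_mod_two, pow_add]

theorem neg_one_pow_val_one : (-1 : R) ^ (1 : ZMod 2).val = -1 := pow_one _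

theorem neg_one_pow_val_eq_ite (x : ZMod 2) :
    (-1 : R) ^ x.val = if x = 0 then 1 else -1 := by
  rcases ZMod.eq_zero_or_eq_one_two x with rfl | rfl <;> simp [ZMod.val_one]

end Sign

theorem neg_one_pow_val_injective : Function.Injective fun x : ZMod 2 => (-1 : ℝ) ^ x.val := by
  intro x y h
  simp only [neg_one_pow_val_eq_ite] at h
  rcases ZMod.eq_zero_or_eq_one_two x with rfl | rfl <;>
    rcases ZMod.eq_zero_or_eq_one_two y with rfl | rfl <;> norm_num at h <;> rfl

section Characters

variable {ι : Type*} [Fintype ι]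

theorem sum_neg_one_pow_val (y : ι → ZMod 2) :
    ∑ t, (-1 : ℝ) ^ (y t).val = Fintype.card ι - 2 * hammingNorm y := by
  have h : ∀ t, (-1 : ℝ) ^ (y t).val = 1 - 2 * if y t ≠ 0 then 1 else 0 := by
    intro t
    by_cases hy : y t = 0 <;> norm_num [neg_one_pow_val_eq_ite, hy]
  rw [sum_congr rfl fun t _ => h t, sum_sub_distrib, ← mul_sum, sum_boole]
  simp [hammingNorm]

theorem sum_neg_one_pow_dotProduct [DecidableEq ι] (c : ι → ZMod 2) :
    ∑ r, (-1 : ℝ) ^ (c ⬝ᵥ r).val = if c = 0 then 2 ^ Fintype.card ι else 0 := by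
  split_ifs with hc
  · simp [hc]
  · obtain ⟨i, hi⟩ := Function.ne_iff.1 hc
    -- the sum is invariant under translation by `Pi.single i 1`, which flips every sign
    have hflip : ∀ r, (-1 : ℝ) ^ (c ⬝ᵥ (r + Pi.single i 1)).val = -(-1) ^ (c ⬝ᵥ r).val := by
      intro r
      rw [dotProduct_add, dotProduct_single, ZMod.eq_one_of_ne_zero_two hi, mul_one,
        neg_one_pow_val_add, neg_one_pow_val_one, mul_neg_one]
    have := Equiv.sum_comp (Equiv.addRight (Pi.single i 1)) fun r => (-1 : ℝ) ^ (c ⬝ᵥ r).val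
    simp only [Equiv.coe_addRight, hflip, sum_neg_distrib] at this
    linarith

end Characters

variable {m : ℕ}

theorem psi_mul_psi (x y : (Fin m → ZMod 2) → ZMod 2) (t : Fin m → ZMod 2) :
    psi x t * psi y t = (-1) ^ ((x + y) t).val :=
  (neg_one_pow_val_add _ _).symm

theorem sum_psi_mul_psi (x y : (Fin m → ZMod 2) → ZMod 2) :
    ∑ t, psi x t * psi y t = ((2 ^ m : ℕ) : ℝ) - 2 * hammingNorm (x + y) := by
  simp only [psi_mul_psi]
  rw [sum_neg_one_pow_val]
  simp

theorem psi_injective : Function.Injective (@psi m) :=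
  fun _ _ h => funext fun t => neg_one_pow_val_injective (congrFun h t)

theorem psi_add_one (x : (Fin m → ZMod 2) → ZMod 2) : psi (x + 1) = -psi x := by
  funext t
  simp [psi, neg_one_pow_val_add, neg_one_pow_val_one]

theorem zero_mem_RM1 : (0 : (Fin m → ZMod 2) → ZMod 2) ∈ RM1 m :=
  ⟨0, 0, by ext; simp⟩

theorem one_mem_RM1 : (1 : (Fin m → ZMod 2) → ZMod 2) ∈ RM1 m :=
  ⟨0, 1, by ext; simp⟩

theorem add_mem_RM1 {g h : (Fin m → ZMod 2) → ZMod 2} (hg : g ∈ RM1 m) (hh : h ∈ RM1 m) :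
    g + h ∈ RM1 m := by
  obtain ⟨c, b, rfl⟩ := hg
  obtain ⟨c', b', rfl⟩ := hh
  refine ⟨c + c', b + b', funext fun x => ?_⟩
  simp only [Pi.add_apply, add_mul, sum_add_distrib]
  ring

theorem dotProduct_mem_RM1 (c : Fin m → ZMod 2) : (c ⬝ᵥ ·) ∈ RM1 m :=
  ⟨c, 0, by simp [dotProduct]⟩

def cosetVertex (u : (Fin m → ZMod 2) → ZMod 2) (s : Fin m → ZMod 2) :
    (Fin m → ZMod 2) → ℝ :=
  psi (u + (s ⬝ᵥ ·))

theorem sum_cosetVertex_mul_cosetVertex (u : (Fin m → ZMod 2) → ZMod 2)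
    (s t : Fin m → ZMod 2) :
    ∑ r, cosetVertex u s r * cosetVertex u t r = if s = t then ((2 ^ m : ℕ) : ℝ) else 0 := by
  have hsum : (u + (s ⬝ᵥ ·)) + (u + (t ⬝ᵥ ·)) = ((s + t) ⬝ᵥ ·) := by
    funext r
    simp only [Pi.add_apply, add_dotProduct]
    rw [add_add_add_comm, ZModModule.add_self, zero_add]
  simp only [cosetVertex, psi_mul_psi, hsum]
  rw [sum_neg_one_pow_dotProduct]
  simp [add_eq_zero_iff_eq_neg, ZModModule.neg_eq_self]

theorem psi_image_RM1_coset (u : (Fin m → ZMod 2) → ZMod 2) :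
    psi '' {x | ∃ w ∈ RM1 m, x = u + w}
      = Set.range (cosetVertex u) ∪ Set.range fun s => -cosetVertex u s := by
  ext p
  constructor
  · rintro ⟨_, ⟨_, ⟨c, b, rfl⟩, rfl⟩, rfl⟩
    rcases ZMod.eq_zero_or_eq_one_two b with rfl | rfl
    · exact .inl ⟨c, by simp [cosetVertex, dotProduct]⟩
    · refine .inr ⟨c, ?_⟩
      simp only [cosetVertex]
      rw [← psi_add_one]
      congr 1
      ext
      simp only [Pi.add_apply, Pi.one_apply, dotProduct]
      ring
  · rintro (⟨s, rfl⟩ | ⟨s, rfl⟩)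
    · exact ⟨_, ⟨_, dotProduct_mem_RM1 s, rfl⟩, rfl⟩
    · exact ⟨_, ⟨_, add_mem_RM1 (dotProduct_mem_RM1 s) one_mem_RM1, add_assoc _ _ _⟩,
        psi_add_one _⟩

section Cosets

variable {κ : Type*} {C : Set ((Fin m → ZMod 2) → ZMod 2)} {u : κ → (Fin m → ZMod 2) → ZMod 2}

theorem eq_of_add_mem_RM1 (hrep : ∀ x ∈ C, ∃! j, ∃ w ∈ RM1 m, x = u j + w)
    {x y : (Fin m → ZMod 2) → ZMod 2} {j j' : κ} (hx : x ∈ C)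
    (hxj : ∃ w ∈ RM1 m, x = u j + w) (hyj : ∃ w ∈ RM1 m, y = u j' + w)
    (hxy : x + y ∈ RM1 m) : j = j' := by
  obtain ⟨w', hw', rfl⟩ := hyj
  refine (hrep x hx).unique hxj ⟨w' + (x + (u j' + w')), add_mem_RM1 hw' hxy, ?_⟩
  rw [← add_assoc, add_left_comm, ZModModule.add_self, add_zero]

theorem disjoint_RM1_cosets (hC : ∀ j, {x | ∃ w ∈ RM1 m, x = u j + w} ⊆ C)
    (hrep : ∀ x ∈ C, ∃! j, ∃ w ∈ RM1 m, x = u j + w) {j j' : κ} (h : j ≠ j') :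
    Disjoint {x | ∃ w ∈ RM1 m, x = u j + w} {x | ∃ w ∈ RM1 m, x = u j' + w} := by
  refine Set.disjoint_left.2 fun x hxj hxj' => h ?_
  refine eq_of_add_mem_RM1 hrep (hC j hxj) hxj hxj' ?_
  rw [ZModModule.add_self]
  exact zero_mem_RM1

theorem iUnion_RM1_cosets (hC : ∀ j, {x | ∃ w ∈ RM1 m, x = u j + w} ⊆ C)
    (hrep : ∀ x ∈ C, ∃! j, ∃ w ∈ RM1 m, x = u j + w) :
    ⋃ j, {x | ∃ w ∈ RM1 m, x = u j + w} = C := by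
  refine (Set.iUnion_subset hC).antisymm fun x hx => ?_
  exact Set.mem_iUnion.2 (hrep x hx).exists

end Cosets

theorem eq_one_of_hammingNorm_eq_card {ι : Type*} [Fintype ι] {y : ι → ZMod 2}
    (h : hammingNorm y = Fintype.card ι) : y = 1 := by
  have hsupp : ({i | y i ≠ 0} : Finset ι) = univ := eq_univ_of_card _ h
  funext i
  have hi := mem_univ i
  rw [← hsupp, mem_filter] at hi
  exact ZMod.eq_one_of_ne_zero_two hi.2

theorem natCast_sub_two_mul_mem_of_near_half {d a n : ℕ} (hd : Even d) (ha : d / 2 + a ≤ d)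
    (hn : n = d / 2 - a ∨ n = d / 2 ∨ n = d / 2 + a) :
    (d : ℝ) - 2 * n ∈ ({2 * (a : ℝ), -(2 * (a : ℝ)), 0} : Set ℝ) := by
  obtain ⟨k, rfl⟩ := hd
  rw [show (k + k) / 2 = k by omega] at ha hn
  replace ha : a ≤ k := by omega
  simp only [Set.mem_insert_iff, Set.mem_singleton_iff]
  rcases hn with rfl | rfl | rfl
  · left; push_cast [Nat.cast_sub ha]; ring
  · right; right; push_cast; ring
  · right; left; push_cast; ring

theorem stmt5 (m : ℕ) (hm : 0 < m) (a : ℕ)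
    (C : Submodule (ZMod 2) ((Fin m → ZMod 2) → ZMod 2))
    (hRM : RM1 m ⊆ (C : Set ((Fin m → ZMod 2) → ZMod 2)))
    (hwts : {n : ℕ | ∃ x ∈ C, (Finset.univ.filter fun t => x t ≠ 0).card = n}
      = ({0, 2 ^ m / 2 - a, 2 ^ m / 2, 2 ^ m / 2 + a, 2 ^ m} : Set ℕ))
    (f : ℕ) (u : Fin f → ((Fin m → ZMod 2) → ZMod 2))
    (hu : ∀ j, u j ∈ C)
    (hrep : ∀ x ∈ C, ∃! j : Fin f, ∃ w ∈ RM1 m, x = u j + w) :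
    (∀ j j', j ≠ j' →
      Disjoint (psi '' {x | ∃ w ∈ RM1 m, x = u j + w})
        (psi '' {x | ∃ w ∈ RM1 m, x = u j' + w})) ∧
    (⋃ j, psi '' {x | ∃ w ∈ RM1 m, x = u j + w})
      = psi '' (C : Set ((Fin m → ZMod 2) → ZMod 2)) ∧
    (∀ j, ∃ v : (Fin m → ZMod 2) → ((Fin m → ZMod 2) → ℝ),
      (∀ s t, ∑ r, v s r * v t r = if s = t then ((2 ^ m : ℕ) : ℝ) else 0) ∧
      psi '' {x | ∃ w ∈ RM1 m, x = u j + w}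
        = Set.range v ∪ Set.range fun s => -(v s)) ∧
    (∀ j j', j ≠ j' →
      ∀ p ∈ psi '' {x | ∃ w ∈ RM1 m, x = u j + w},
      ∀ q ∈ psi '' {x | ∃ w ∈ RM1 m, x = u j' + w},
        (∑ t, p t * q t) ∈ ({2 * (a : ℝ), -(2 * (a : ℝ)), 0} : Set ℝ)) := by
  have hC : ∀ j, {x | ∃ w ∈ RM1 m, x = u j + w} ⊆ C := by
    rintro j _ ⟨w, hw, rfl⟩
    exact C.add_mem (hu j) (hRM hw)
  have hwts' : {n | ∃ x ∈ C, hammingNorm x = n}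
      = ({0, 2 ^ m / 2 - a, 2 ^ m / 2, 2 ^ m / 2 + a, 2 ^ m} : Set ℕ) := hwts
  refine ⟨fun j j' h => (Set.disjoint_image_iff psi_injective).2 (disjoint_RM1_cosets hC hrep h),
    by rw [← Set.image_iUnion, iUnion_RM1_cosets hC hrep],
    fun j => ⟨_, sum_cosetVertex_mul_cosetVertex (u j), psi_image_RM1_coset (u j)⟩, ?_⟩
  rintro j j' hjj _ ⟨x, hxj, rfl⟩ _ ⟨y, hyj, rfl⟩
  have hxy : x + y ∉ RM1 m := fun h => hjj (eq_of_add_mem_RM1 hrep (hC j hxj) hxj hyj h)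
  have ha : 2 ^ m / 2 + a ≤ 2 ^ m := by
    obtain ⟨z, -, hz⟩ : 2 ^ m / 2 + a ∈ {n | ∃ x ∈ C, hammingNorm x = n} := by simp [hwts']
    exact hz ▸ hammingNorm_le_card_fintype.trans_eq (by simp)
  have hwt : hammingNorm (x + y) ∈ {n | ∃ x ∈ C, hammingNorm x = n} :=
    ⟨x + y, C.add_mem (hC j hxj) (hC j' hyj), rfl⟩
  have hwt0 : hammingNorm (x + y) ≠ 0 := fun h => hxy (hammingNorm_eq_zero.1 h ▸ zero_mem_RM1)
  have hwtd : hammingNorm (x + y) ≠ 2 ^ m := fun h =>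
    hxy (eq_one_of_hammingNorm_eq_card (h.trans (by simp)) ▸ one_mem_RM1)
  rw [hwts'] at hwt
  simp only [Set.mem_insert_iff, Set.mem_singleton_iff] at hwt
  rw [sum_psi_mul_psi]
  exact natCast_sub_two_mul_mem_of_near_half (Nat.even_pow.2 ⟨even_two, hm.ne'⟩) ha (by omega)
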